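/- arXiv:2005.01342 — 2 statements merged into one kernel-verified Lean document; each statement's English description precedes it below -/
import Mathlib

section
/- Let 𝒜 be a trim ℕ-automaton without heavy cycles. Then its barbell graph 𝔊 is acyclic, i.e. 𝔊 contains no directed cycle. -/
set_option autoImplicit false

/-! ### Asymptotic growth of functions `A* → ℕ` -/

/-- `g` has `k`-polynomial growth: `g(w) = O(|w|^k)` and there is an infinite set `L`
of words on which `g(w) = Ω(|w|^k)`. -/
def PolyGrowth {A : Type} (g : List A → ℕ) (k : ℕ) : Prop :=
  (∃ C : ℕ, ∀ w, g w ≤ C * w.length ^ k + C) ∧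
  (∃ L : Set (List A), L.Infinite ∧ ∃ c : ℕ, 0 < c ∧ ∀ w ∈ L, w.length ^ k ≤ c * g w)

/-- `g` has exponential growth: `g(w) = 2^{O(|w|)}` and there is an infinite set `L`
of words on which `g(w) = 2^{Ω(|w|)}`. -/
def ExpGrowth {A : Type} (g : List A → ℕ) : Prop :=
  (∃ C : ℕ, ∀ w, g w ≤ 2 ^ (C * w.length + C)) ∧
  (∃ L : Set (List A), L.Infinite ∧ ∃ c : ℕ, 0 < c ∧ ∀ w ∈ L, 2 ^ w.length ≤ (g w) ^ c)

/-! ### Substitutions -/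

/-- Extension of a substitution `s : X → (B ⊎ X)*` to a morphism on `(B ⊎ X)*`
fixing the letters of `B`; this also gives the composition of substitutions,
`(s₁ ∘ s₂) x = applySubst s₁ (s₂ x)`. -/
def applySubst {B X : Type} (s : X → List (B ⊕ X)) (l : List (B ⊕ X)) : List (B ⊕ X) :=
  l.flatMap (fun c => match c with | Sum.inl b => [Sum.inl b] | Sum.inr x => s x)

/-- Evaluation of a word over `B ⊎ X` under a valuation `v : X → B*` of the registers. -/
def evalSubst {B X : Type} (v : X → List B) (l : List (B ⊕ X)) : List B :=
  l.flatMap (fun c => match c with | Sum.inl b => [b] | Sum.inr x => v x)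

/-- Number of occurrences of register `x` in a word over `B ⊎ X`. -/
noncomputable def occCount {B X : Type} (x : X) (l : List (B ⊕ X)) : ℕ :=
  l.countP (fun c => @decide (c = Sum.inr x) (Classical.propDecidable _))

/-- Total number of occurrences of register `x` in the whole set of words `{s y | y ∈ X}`. -/
noncomputable def totalOcc {B X : Type} [Fintype X] (s : X → List (B ⊕ X)) (x : X) : ℕ :=
  ∑ y : X, occCount x (s y)

/-! ### Streaming string transducers -/

/-- A streaming string transducer (SST) with input alphabet `A` and output alphabet `B`:
finitely many states `Q` with initial state `q0`, finitely many registers `X` with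
initial contents `init`, a partial transition/update function (`trans`, returning the
successor state together with the register update substitution, with a common domain),
and a partial output function `out`. -/
structure SST (A B : Type) where
  Q : Type
  X : Type
  [finQ : Fintype Q]
  [finX : Fintype X]
  q0 : Q
  init : X → List B
  trans : Q → A → Option (Q × (X → List (B ⊕ X)))
  out : Q → Option (List (B ⊕ X))

attribute [instance] SST.finQ SST.finX

/-- Run of an SST from state `q` with current register valuation `v`. -/
def SST.runFrom {A B : Type} (T : SST A B) :
    T.Q → (T.X → List B) → List A → Option (T.Q × (T.X → List B))
  | q, v, [] => some (q, v)
  | q, v, a :: w =>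
    match T.trans q a with
    | none => none
    | some (q', s) => T.runFrom q' (fun x => evalSubst v (s x)) w

/-- The (partial) function computed by an SST. -/
def SST.eval {A B : Type} (T : SST A B) (w : List A) : Option (List B) :=
  (T.runFrom T.q0 T.init w).bind fun p => (T.out p.1).map fun o => evalSubst p.2 o

def SST.Computes {A B : Type} (T : SST A B) (f : List A → Option (List B)) : Prop :=
  ∀ w, T.eval w = f w

/-- An SST is copyless if every update substitution uses each register at most once
in total. -/
def SST.Copyless {A B : Type} (T : SST A B) : Prop :=
  ∀ q a p, T.trans q a = some p → ∀ x : T.X, totalOcc p.2 x ≤ 1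

/-- An SST is `k`-layered if its registers can be partitioned into layers
`X_0, …, X_k` such that every update of a register of layer `i` only uses registers
of layers `≤ i`, and each register of layer `i` is used at most once in total in the
updates of the registers of layer `i`. -/
def SST.IsLayered {A B : Type} (T : SST A B) (k : ℕ) : Prop :=
  ∃ layer : T.X → Fin (k + 1),
    ∀ q a p, T.trans q a = some p →
      (∀ x y, Sum.inr y ∈ p.2 x → layer y ≤ layer x) ∧
      (∀ y : T.X,
        (∑ x ∈ Finset.univ.filter (fun x => layer x = layer y), occCount y (p.2 x)) ≤ 1)

/-- The composed substitution `λ(q, w)` applied along the run reading `w` from state `q`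
(together with the state reached). -/
def SST.substFrom {A B : Type} (T : SST A B) :
    T.Q → List A → Option (T.Q × (T.X → List (B ⊕ T.X)))
  | q, [] => some (q, fun x => [Sum.inr x])
  | q, a :: w =>
    match T.trans q a with
    | none => none
    | some (q', s) => (T.substFrom q' w).map fun p => (p.1, fun x => applySubst s (p.2 x))

/-- An SST is `(k,B)`-bounded if its registers can be partitioned into layers
`X_0, …, X_k` such that every update of a register of layer `i` only uses registers of
layers `≤ i`, and for every state `q` and word `w`, each register of layer `i` occurs
at most `B` times in total in `{λ(q,w)(x) | x ∈ X_i}`. -/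
def SST.IsBounded {A B : Type} (T : SST A B) (k Bd : ℕ) : Prop :=
  ∃ layer : T.X → Fin (k + 1),
    (∀ q a p, T.trans q a = some p → ∀ x y, Sum.inr y ∈ p.2 x → layer y ≤ layer x) ∧
    (∀ q w p, T.substFrom q w = some p →
      ∀ y : T.X,
        (∑ x ∈ Finset.univ.filter (fun x => layer x = layer y), occCount y (p.2 x)) ≤ Bd)

/-! ### Simple SSTs -/

/-- A simple SST: total, a single state (hence no state component), and update
substitutions and output using no letters of `B`. -/
structure SimpleSST (A B : Type) where
  X : Type
  [finX : Fintype X]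
  [decX : DecidableEq X]
  init : X → List B
  upd : A → X → List X
  out : List X

attribute [instance] SimpleSST.finX SimpleSST.decX

/-- Register valuation of a simple SST after reading a word, starting from valuation `v`. -/
def SimpleSST.valFrom {A B : Type} (T : SimpleSST A B) :
    (T.X → List B) → List A → T.X → List B
  | v, [] => v
  | v, a :: w => T.valFrom (fun x => (T.upd a x).flatMap v) w

/-- Register valuation `𝒯^w` of a simple SST after reading `w`. -/
def SimpleSST.val {A B : Type} (T : SimpleSST A B) (w : List A) : T.X → List B :=
  T.valFrom T.init w

/-- The (total) function computed by a simple SST. -/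
def SimpleSST.eval {A B : Type} (T : SimpleSST A B) (w : List A) : List B :=
  (T.out).flatMap (T.val w)

/-! ### Two-way transducers -/

/-- A tape symbol: a letter of `A` or one of the two endmarkers `⊢`, `⊣`. -/
inductive TapeSym (A : Type) where
  | lend
  | rend
  | letter (a : A)

/-- The content of the tape `⊢w⊣` at position `m ∈ {0, …, |w|+1}`. -/
def tapeAt {A : Type} (w : List A) (m : ℕ) : TapeSym A :=
  if m = 0 then TapeSym.lend
  else
    match w[m - 1]? with
    | some a => TapeSym.letter a
    | none => TapeSym.rend

/-- Head moves. -/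
inductive Dir where
  | left
  | right

/-- A deterministic two-way transducer: finitely many states with an initial state and
a set of final states, and a partial transition/output function (common domain). -/
structure TwoWayT (A B : Type) where
  Q : Type
  [finQ : Fintype Q]
  q0 : Q
  final : Set Q
  trans : Q → TapeSym A → Option ((Q × Dir) × List B)

attribute [instance] TwoWayT.finQ

/-- `TwoWayT.Steps T w c v c'`: on input `⊢w⊣` the transducer can go from
configuration `c` to configuration `c'` producing output `v`. -/
inductive TwoWayT.Steps {A B : Type} (T : TwoWayT A B) (w : List A) :
    T.Q × ℕ → List B → T.Q × ℕ → Prop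
  | refl (c : T.Q × ℕ) : TwoWayT.Steps T w c [] c
  | stepL {q : T.Q} {m : ℕ} {q' : T.Q} {v u : List B} {cf : T.Q × ℕ} :
      T.trans q (tapeAt w m) = some ((q', Dir.left), v) → 1 ≤ m →
      TwoWayT.Steps T w (q', m - 1) u cf → TwoWayT.Steps T w (q, m) (v ++ u) cf
  | stepR {q : T.Q} {m : ℕ} {q' : T.Q} {v u : List B} {cf : T.Q × ℕ} :
      T.trans q (tapeAt w m) = some ((q', Dir.right), v) → m ≤ w.length →
      TwoWayT.Steps T w (q', m + 1) u cf → TwoWayT.Steps T w (q, m) (v ++ u) cf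

/-- The two-way transducer computes the partial function `f`: `f w = some v` iff there
is an accepting run on `⊢w⊣` (from `(q0, 0)` to `(q, |w|+1)` with `q` final)
producing `v`. -/
def TwoWayT.Computes {A B : Type} (T : TwoWayT A B) (f : List A → Option (List B)) : Prop :=
  ∀ w v, f w = some v ↔ ∃ q ∈ T.final, TwoWayT.Steps T w (T.q0, 0) v (q, w.length + 1)

/-! ### Marble transducers -/

/-- Actions of a marble transducer: move left, move right, lift the marble, or drop a
marble of color `c`. -/
inductive MAct (C : Type) where
  | left
  | right
  | lift
  | drop (c : C)

/-- A deterministic marble transducer: finitely many states with an initial state and a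
set of final states, finitely many marble colors `C`, and a partial transition/output
function (common domain) reading the current state, the tape symbol, and the color of
the marble at the current position (if any); on a position carrying a marble the head
may only move left or lift the marble. -/
structure MarbleT (A B : Type) where
  Q : Type
  C : Type
  [finQ : Fintype Q]
  [finC : Fintype C]
  q0 : Q
  final : Set Q
  trans : Q → TapeSym A → Option C → Option ((Q × MAct C) × List B)
  marble_left_or_lift : ∀ q s c p, trans q s (some c) = some p →
    p.1.2 = MAct.left ∨ p.1.2 = MAct.lift

attribute [instance] MarbleT.finQ MarbleT.finC

/-- The color of the marble at position `m`, for a stack `π` of dropped marbles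
(topmost first, positions strictly increasing from the top and all ≥ the head
position). -/
def marbleAt {C : Type} (m : ℕ) : List (C × ℕ) → Option C
  | [] => none
  | (c, p) :: _ => if p = m then some c else none

/-- `MarbleT.Steps T w c v c'`: on input `⊢w⊣` the marble transducer can go from
configuration `c` to configuration `c'` producing output `v`. A configuration is a
triple (state, head position, stack of dropped marbles). -/
inductive MarbleT.Steps {A B : Type} (T : MarbleT A B) (w : List A) :
    T.Q × ℕ × List (T.C × ℕ) → List B → T.Q × ℕ × List (T.C × ℕ) → Prop
  | refl (c : T.Q × ℕ × List (T.C × ℕ)) : MarbleT.Steps T w c [] c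
  | stepL {q : T.Q} {m : ℕ} {π : List (T.C × ℕ)} {q' : T.Q} {v u : List B}
      {cf : T.Q × ℕ × List (T.C × ℕ)} :
      T.trans q (tapeAt w m) (marbleAt m π) = some ((q', MAct.left), v) → 1 ≤ m →
      MarbleT.Steps T w (q', m - 1, π) u cf → MarbleT.Steps T w (q, m, π) (v ++ u) cf
  | stepR {q : T.Q} {m : ℕ} {π : List (T.C × ℕ)} {q' : T.Q} {v u : List B}
      {cf : T.Q × ℕ × List (T.C × ℕ)} :
      marbleAt m π = none →
      T.trans q (tapeAt w m) none = some ((q', MAct.right), v) → m ≤ w.length →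
      MarbleT.Steps T w (q', m + 1, π) u cf → MarbleT.Steps T w (q, m, π) (v ++ u) cf
  | stepLift {q : T.Q} {m : ℕ} {π : List (T.C × ℕ)} {q' : T.Q} {cc : T.C} {v u : List B}
      {cf : T.Q × ℕ × List (T.C × ℕ)} :
      T.trans q (tapeAt w m) (some cc) = some ((q', MAct.lift), v) →
      MarbleT.Steps T w (q', m, π) u cf →
      MarbleT.Steps T w (q, m, (cc, m) :: π) (v ++ u) cf
  | stepDrop {q : T.Q} {m : ℕ} {π : List (T.C × ℕ)} {q' : T.Q} {cc : T.C} {v u : List B}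
      {cf : T.Q × ℕ × List (T.C × ℕ)} :
      marbleAt m π = none →
      T.trans q (tapeAt w m) none = some ((q', MAct.drop cc), v) →
      MarbleT.Steps T w (q', m, (cc, m) :: π) u cf →
      MarbleT.Steps T w (q, m, π) (v ++ u) cf

/-- The marble transducer computes the partial function `f`: `f w = some v` iff there is
an accepting run on `⊢w⊣` (from `(q0, 0, ε)` to `(q, |w|+1, ε)` with `q` final)
producing `v`. -/
def MarbleT.Computes {A B : Type} (T : MarbleT A B) (f : List A → Option (List B)) : Prop :=
  ∀ w v, f w = some v ↔
    ∃ q ∈ T.final, MarbleT.Steps T w (T.q0, 0, []) v (q, w.length + 1, [])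

/-- A `k`-marble transducer: every configuration reachable from the initial
configuration carries at most `k` marbles. -/
def MarbleT.IsKMarble {A B : Type} (T : MarbleT A B) (k : ℕ) : Prop :=
  ∀ (w : List A) (u : List B) (cfg : T.Q × ℕ × List (T.C × ℕ)),
    MarbleT.Steps T w (T.q0, 0, []) u cfg → cfg.2.2.length ≤ k

/-- `f` is computable by a `k`-marble transducer. -/
def ComputableKMarble {A B : Type} (f : List A → List B) (k : ℕ) : Prop :=
  ∃ T : MarbleT A B, T.IsKMarble k ∧ T.Computes (fun w => some (f w))

/-! ### Matrices over ℕ and ℕ-automata -/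

/-- Product of two square matrices over `ℕ` (given as functions). -/
def matMul {Q : Type} [Fintype Q] (M N : Q → Q → ℕ) : Q → Q → ℕ :=
  fun i j => ∑ x : Q, M i x * N x j

/-- Identity matrix over `ℕ`. -/
def matId {Q : Type} [DecidableEq Q] : Q → Q → ℕ :=
  fun i j => if i = j then 1 else 0

/-- Row vector times matrix. -/
def vecMat {Q : Type} [Fintype Q] (v : Q → ℕ) (M : Q → Q → ℕ) : Q → ℕ :=
  fun j => ∑ x : Q, v x * M x j

/-- Matrix times column vector. -/
def matVec {Q : Type} [Fintype Q] (M : Q → Q → ℕ) (v : Q → ℕ) : Q → ℕ :=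
  fun i => ∑ x : Q, M i x * v x

/-- Dot product of two vectors over `ℕ`. -/
def dotProd {Q : Type} [Fintype Q] (v w : Q → ℕ) : ℕ :=
  ∑ x : Q, v x * w x

/-- An `ℕ`-automaton: a finite set of states `Q`, an initial row vector `α`, a weight
matrix `μ a` for every letter `a` (extended to words as a monoid morphism `μW`), and a
final column vector `β`. -/
structure NAut (A : Type) where
  Q : Type
  [finQ : Fintype Q]
  [decQ : DecidableEq Q]
  α : Q → ℕ
  μ : A → Q → Q → ℕ
  β : Q → ℕ

attribute [instance] NAut.finQ NAut.decQ

/-- The monoid morphism `A* → ℕ^{Q×Q}` extending `μ`. -/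
def NAut.μW {A : Type} (T : NAut A) : List A → T.Q → T.Q → ℕ
  | [] => matId
  | a :: w => matMul (T.μ a) (T.μW w)

/-- The total function `g : A* → ℕ` computed by the `ℕ`-automaton: `g w = α·μ(w)·β`. -/
def NAut.g {A : Type} (T : NAut A) (w : List A) : ℕ :=
  dotProd (vecMat T.α (T.μW w)) T.β

/-- Trimness: every state is accessible and co-accessible with nonzero weight. -/
def NAut.Trim {A : Type} (T : NAut A) : Prop :=
  ∀ q : T.Q, (∃ u, 1 ≤ vecMat T.α (T.μW u) q) ∧ (∃ v, 1 ≤ matVec (T.μW v) T.β q)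

/-- A heavy cycle on state `q`: a nonempty word `v` with `μ(v)(q,q) ≥ 2`. -/
def NAut.HeavyCycle {A : Type} (T : NAut A) (q : T.Q) (v : List A) : Prop :=
  v ≠ [] ∧ 2 ≤ T.μW v q q

/-- A barbell from `q` to `q' ≠ q`: a nonempty word `v` with `μ(v)(q,q) ≥ 1`,
`μ(v)(q,q') ≥ 1` and `μ(v)(q',q') ≥ 1`. -/
def NAut.Barbell {A : Type} (T : NAut A) (q q' : T.Q) (v : List A) : Prop :=
  q ≠ q' ∧ v ≠ [] ∧ 1 ≤ T.μW v q q ∧ 1 ≤ T.μW v q q' ∧ 1 ≤ T.μW v q' q'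

/-- Edge of the barbell graph `𝔊`. -/
def NAut.GEdge {A : Type} (T : NAut A) (q1 q2 : T.Q) : Prop :=
  ∃ q q' v, T.Barbell q q' v ∧ (∃ w, 1 ≤ T.μW w q1 q) ∧ (∃ w', 1 ≤ T.μW w' q' q2)

/-- `PathLen G q n`: there is a directed path of length `n` (counting edges) in the
graph `G` ending in `q`. -/
inductive PathLen {Q : Type} (G : Q → Q → Prop) : Q → ℕ → Prop
  | zero (q : Q) : PathLen G q 0
  | succ {p q : Q} {n : ℕ} : PathLen G p n → G p q → PathLen G q (n + 1)

/-- The height of `q` in the graph `G` is `n`: the maximal length of a directed path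
ending in `q` is `n`. -/
def HeightIs {Q : Type} (G : Q → Q → Prop) (q : Q) (n : ℕ) : Prop :=
  PathLen G q n ∧ ∀ m, PathLen G q m → m ≤ n

/-! ### Statement-specific predicates -/

/-- Case (1) of the trichotomy: `|f|` has exponential growth and `f` is not computable
with `k` marbles for any `k`. -/
def MarbleCase1 {A B : Type} (f : List A → List B) : Prop :=
  ExpGrowth (fun w => (f w).length) ∧ ∀ k : ℕ, ¬ ComputableKMarble f k

/-- Case (2) of the trichotomy: `|f|` has `(k+1)`-polynomial growth for some `k`, `f` is
computable with `k` marbles, and `k` is the least possible number of marbles. -/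
def MarbleCase2 {A B : Type} (f : List A → List B) : Prop :=
  ∃ k : ℕ, PolyGrowth (fun w => (f w).length) (k + 1) ∧ ComputableKMarble f k ∧
    ∀ j : ℕ, ComputableKMarble f j → k ≤ j

/-- Case (3) of the trichotomy: `|f|` has `0`-polynomial growth and `f` is computable
with `0` marbles. -/
def MarbleCase3 {A B : Type} (f : List A → List B) : Prop :=
  PolyGrowth (fun w => (f w).length) 0 ∧ ComputableKMarble f 0

/-- The second alternative of Lemma `lem:graph`: `g` has `k`-polynomial growth for some
`k ≥ 0` and the states admit a partition `S_0, …, S_k` satisfying (a), (b), (c). -/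
def NAutPolyCase {A : Type} (T : NAut A) : Prop :=
  ∃ k : ℕ, PolyGrowth T.g k ∧
    ∃ S : T.Q → Fin (k + 1),
      (∀ q q' : T.Q, (∃ w, 1 ≤ T.μW w q q') → S q ≤ S q') ∧
      (∃ Bd : ℕ, ∀ q q' : T.Q, S q = S q' → ∀ w, T.μW w q q' ≤ Bd) ∧
      (∀ q : T.Q, ∃ C : ℕ, ∀ w, vecMat T.α (T.μW w) q ≤ C * w.length ^ (S q : ℕ) + C)

private lemma matMul_assoc' {Q : Type} [Fintype Q] (M N P : Q → Q → ℕ) :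
    matMul (matMul M N) P = matMul M (matMul N P) := by
  funext i j
  simp only [matMul, Finset.sum_mul, Finset.mul_sum, mul_assoc]
  exact Finset.sum_comm

private lemma muW_append {A : Type} (T : NAut A) (u v : List A) :
    T.μW (u ++ v) = matMul (T.μW u) (T.μW v) := by
  induction u with
  | nil =>
    funext i j
    simp [NAut.μW, matMul, matId, ite_mul, Finset.sum_ite_eq]
  | cons a u ih =>
    simp only [List.cons_append, List.append_eq, NAut.μW, ih, matMul_assoc']

private lemma entry_le {A : Type} (T : NAut A) (u v : List A) (i x j : T.Q) :
    T.μW u i x * T.μW v x j ≤ T.μW (u ++ v) i j := by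
  rw [muW_append]
  exact Finset.single_le_sum (f := fun x => T.μW u i x * T.μW v x j)
    (fun _ _ => Nat.zero_le _) (Finset.mem_univ x)

private lemma edge_two {A : Type} (T : NAut A) {q1 q2 : T.Q} (h : T.GEdge q1 q2) :
    ∃ u, u ≠ [] ∧ 2 ≤ T.μW u q1 q2 := by
  obtain ⟨q, q', v, ⟨hne, hv, h1, h2, h3⟩, ⟨w, hw⟩, ⟨w', hw'⟩⟩ := h
  have a1 : 1 ≤ T.μW (v ++ w') q' q2 :=
    le_trans (le_trans (by norm_num) (Nat.mul_le_mul h3 hw'))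
      (entry_le T v w' q' q' q2)
  have a2 : 1 ≤ T.μW (v ++ w') q q2 :=
    le_trans (le_trans (by norm_num) (Nat.mul_le_mul h2 hw'))
      (entry_le T v w' q q' q2)
  have key : 2 ≤ T.μW (v ++ (v ++ w')) q q2 := by
    rw [muW_append]
    have hpair : ∑ x ∈ ({q, q'} : Finset T.Q),
        T.μW v q x * T.μW (v ++ w') x q2
        = T.μW v q q * T.μW (v ++ w') q q2
          + T.μW v q q' * T.μW (v ++ w') q' q2 :=
      Finset.sum_pair hne
    have hsub : ∑ x ∈ ({q, q'} : Finset T.Q),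
        T.μW v q x * T.μW (v ++ w') x q2
        ≤ matMul (T.μW v) (T.μW (v ++ w')) q q2 :=
      Finset.sum_le_sum_of_subset (Finset.subset_univ _)
    refine le_trans ?_ hsub
    rw [hpair]
    have t1 : 1 ≤ T.μW v q q * T.μW (v ++ w') q q2 :=
      le_trans (by norm_num) (Nat.mul_le_mul h1 a2)
    have t2 : 1 ≤ T.μW v q q' * T.μW (v ++ w') q' q2 :=
      le_trans (by norm_num) (Nat.mul_le_mul h2 a1)
    omega
  refine ⟨w ++ (v ++ (v ++ w')), by simp [hv], ?_⟩
  calc 2 ≤ T.μW w q1 q * T.μW (v ++ (v ++ w')) q q2 := by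
        calc 2 = 1 * 2 := by norm_num
        _ ≤ _ := Nat.mul_le_mul hw key
    _ ≤ _ := entry_le T w _ q1 q q2

private lemma transGen_two {A : Type} (T : NAut A) {a b : T.Q}
    (h : Relation.TransGen T.GEdge a b) :
    ∃ u, u ≠ [] ∧ 2 ≤ T.μW u a b := by
  induction h with
  | single h => exact edge_two T h
  | @tail m c _ h ih =>
    obtain ⟨u, hu, h2⟩ := ih
    obtain ⟨u', hu', h2'⟩ := edge_two T h
    refine ⟨u ++ u', by simp [hu], ?_⟩
    refine le_trans ?_ (entry_le T u u' a m c)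
    calc 2 = 2 * 1 := by norm_num
      _ ≤ _ := Nat.mul_le_mul h2 (by omega)

theorem stmt10 {A : Type} [Fintype A] (T : NAut A) (hT : T.Trim)
    (h : ¬ ∃ q v, T.HeavyCycle q v) :
    ∀ q, ¬ Relation.TransGen T.GEdge q q := by
  intro q hq
  obtain ⟨u, hu, h2⟩ := transGen_two T hq
  exact h ⟨q, u, hu, h2⟩
end

section
/- Let 𝒜 be a trim ℕ-automaton without heavy cycles, and for i ≥ 0 let S_i be the set of states of height i in its barbell graph 𝔊. Then there exists B ≥ 0 such that for every i, every pair of states q,q' ∈ S_i and every word w ∈ A*, μ(w)(q,q') ≤ B. -/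
set_option autoImplicit false

/-!
Let `q`, `q'` have the same height, so that `𝔊` has no edge `q → q'`: no barbell goes from a state
reachable from `q` to a state from which `q'` is reachable. We bound `μ(w)(y, q')` for every `y`
reachable from `q`, by well-founded induction along reachability. Each run from `y` to `q'` is split
at the position where it leaves the set of states from which `y` is reachable: the prefix has
weight at most `1` (more would close a heavy cycle on `y`), the letter has bounded weight, and the
suffix starts at a state strictly below `y`, so it is bounded by induction. It remains to bound the
number of exit positions. Colour each pair of positions by the positivity pattern of the factor of
`w` between them; by Ramsey's theorem, many exit positions yield four positions all of whose
factors share one pattern, which is then an idempotent relation. Loops of this relation before and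
after the exit form a barbell from a state reachable from `q` to a state from which `q'` is
reachable, which is impossible.
-/

namespace List

variable {α : Type*}

def factor (w : List α) (i j : ℕ) : List α := (w.take j).drop i

variable (w : List α) {i j k : ℕ}

lemma take_append_factor (h : i ≤ j) : w.take i ++ w.factor i j = w.take j := by
  conv_rhs => rw [← take_append_drop i (w.take j), take_take, min_eq_left h]
  rfl

lemma factor_append_drop (h : i ≤ j) : w.factor i j ++ w.drop j = w.drop i := by
  conv_rhs => rw [← take_append_drop (j - i) (w.drop i), drop_drop, Nat.add_sub_cancel' h]
  rw [factor, drop_take]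

lemma factor_append_factor (hij : i ≤ j) (hjk : j ≤ k) :
    w.factor i j ++ w.factor j k = w.factor i k := by
  have := (w.take k).factor_append_drop hij
  rwa [factor, take_take, min_eq_left hjk] at this

lemma factor_succ (h : i < w.length) : w.factor i (i + 1) = [w[i]] := by
  rw [factor, drop_take, Nat.add_sub_cancel_left, take_one_drop_eq_of_lt_length h]
  rfl

end List

section Ramsey

open Finset

variable {ι κ : Type*} [Fintype κ] [Nonempty κ] [DecidableEq κ]

lemma exists_le_card_fiber_univ {s : Finset ι} (f : ι → κ) {n : ℕ}
    (h : Fintype.card κ * n ≤ #s) : ∃ c, n ≤ #{x ∈ s | f x = c} := by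
  obtain ⟨c, -, hc⟩ := exists_le_card_fiber_of_mul_le_card_of_maps_to
    (fun x _ => mem_univ (f x)) univ_nonempty (by rwa [card_univ])
  exact ⟨c, hc⟩

variable [LinearOrder ι]

theorem exists_prehomogeneous (m : ℕ) :
    ∃ N, ∀ (S : Finset ι) (col : ι → ι → κ), N ≤ #S →
      ∃ U ⊆ S, ∃ f : ι → κ, #U = m ∧ ∀ i ∈ U, ∀ j ∈ U, i < j → col i j = f i := by
  induction m with
  | zero =>
    exact ⟨0, fun _ _ _ => ⟨∅, empty_subset _, fun _ => Classical.arbitrary κ, rfl, by simp⟩⟩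
  | succ m ih =>
    obtain ⟨N, hN⟩ := ih
    refine ⟨Fintype.card κ * N + 1, fun S col hS => ?_⟩
    have hne : S.Nonempty := card_pos.1 (by omega)
    set x := S.min' hne
    have hx : x ∈ S := S.min'_mem hne
    obtain ⟨c, hc⟩ := exists_le_card_fiber_univ (s := S.erase x) (col x) (n := N)
      (by rw [card_erase_of_mem hx]; omega)
    obtain ⟨U, hUS, f, hUm, hU⟩ := hN _ col hc
    have hxU : ∀ i ∈ U, x < i := fun i hi =>
      have hi' := mem_erase.1 (mem_filter.1 (hUS hi)).1
      lt_of_le_of_ne (S.min'_le i hi'.2) (Ne.symm hi'.1)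
    refine ⟨insert x U, insert_subset hx (hUS.trans ((filter_subset _ _).trans (erase_subset _ _))),
      Function.update f x c, ?_, ?_⟩
    · rw [card_insert_of_notMem (fun h => lt_irrefl x (hxU x h)), hUm]
    · intro i hi j hj hij
      have hjU : j ∈ U := by
        rcases mem_insert.1 hj with rfl | hj
        · rcases mem_insert.1 hi with rfl | hi
          · exact absurd hij (lt_irrefl _)
          · exact absurd (hxU i hi) (not_lt.2 hij.le)
        · exact hj
      rcases mem_insert.1 hi with rfl | hi
      · simpa using (mem_filter.1 (hUS hjU)).2
      · rw [Function.update_of_ne (hxU i hi).ne']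
        exact hU i hi j hjU hij

theorem exists_homogeneous (s : ℕ) :
    ∃ N, ∀ (S : Finset ι) (col : ι → ι → κ), N ≤ #S →
      ∃ (p : Fin s ↪o ι) (c : κ), (∀ k, p k ∈ S) ∧ ∀ k l, k < l → col (p k) (p l) = c := by
  obtain ⟨N, hN⟩ := exists_prehomogeneous (ι := ι) (κ := κ) (Fintype.card κ * s)
  refine ⟨N, fun S col hS => ?_⟩
  obtain ⟨U, hUS, f, hUcard, hU⟩ := hN S col hS
  obtain ⟨c, hc⟩ := exists_le_card_fiber_univ (s := U) f hUcard.ge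
  obtain ⟨V, hVU, hV⟩ := exists_subset_card_eq hc
  have hmem : ∀ k, V.orderEmbOfFin hV k ∈ {i ∈ U | f i = c} := fun k =>
    hVU (V.orderEmbOfFin_mem hV k)
  refine ⟨V.orderEmbOfFin hV, c, fun k => hUS (mem_filter.1 (hmem k)).1, fun k l hkl => ?_⟩
  rw [hU _ (mem_filter.1 (hmem k)).1 _ (mem_filter.1 (hmem l)).1 (by simpa using hkl),
    (mem_filter.1 (hmem k)).2]

end Ramsey

lemma exists_loop_of_idempotent {α : Type*} [Finite α] {e : α → α → Prop}
    (he : ∀ x z, e x z ↔ ∃ t, e x t ∧ e t z) {x z : α} (hxz : e x z) :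
    ∃ a, e x a ∧ e a a ∧ e a z := by
  have hnext : ∀ u, ∃ u', e u z → e u u' ∧ e u' z := fun u => by
    by_cases hu : e u z
    · obtain ⟨t, ht⟩ := (he u z).1 hu
      exact ⟨t, fun _ => ht⟩
    · exact ⟨u, fun h => absurd h hu⟩
  choose f hf using hnext
  set s : ℕ → α := fun k => f^[k] x with hs_def
  have hsz : ∀ k, e (s k) z := fun k => by
    induction k with
    | zero => exact hxz
    | succ k ih => simpa only [hs_def, Function.iterate_succ_apply'] using (hf _ ih).2
  have hstep : ∀ k, e (s k) (s (k + 1)) := fun k => by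
    simpa only [hs_def, Function.iterate_succ_apply'] using (hf _ (hsz k)).1
  have : IsTrans α e := ⟨fun a b c hab hbc => (he a c).2 ⟨b, hab, hbc⟩⟩
  have hchain := Nat.rel_of_forall_rel_succ_of_lt e hstep
  have hloop : ∀ i j, i < j → s i = s j → ∃ a, e x a ∧ e a a ∧ e a z := fun i j hij hs =>
    ⟨s j, hchain (Nat.zero_lt_of_lt hij), by simpa only [hs] using hchain hij, hsz j⟩
  obtain ⟨i, j, hij, hs⟩ := Finite.exists_ne_map_eq_of_infinite s
  rcases hij.lt_or_gt with h | h
  · exact hloop i j h hs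
  · exact hloop j i h hs.symm

lemma exists_bound_of_finite {ι β : Type*} [Finite ι] {P : ι → Prop} {f : ι → β → ℕ}
    (h : ∀ i, P i → ∃ B, ∀ x, f i x ≤ B) : ∃ B, ∀ i, P i → ∀ x, f i x ≤ B := by
  have h' : ∀ i, ∃ B, P i → ∀ x, f i x ≤ B := fun i => by
    by_cases hi : P i
    · exact (h i hi).imp fun B hB _ => hB
    · exact ⟨0, fun h => absurd h hi⟩
  choose g hg using h'
  obtain ⟨B, hB⟩ := Finite.bddAbove_range g
  exact ⟨B, fun i hi x => (hg i hi x).trans (hB ⟨i, rfl⟩)⟩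

lemma HeightIs.not_rel {Q : Type} {G : Q → Q → Prop} {q q' : Q} {i : ℕ} (hq : HeightIs G q i)
    (hq' : HeightIs G q' i) : ¬ G q q' := fun h => by
  have := hq'.2 (i + 1) (PathLen.succ hq.1 h)
  omega

open Finset

namespace NAut

variable {A : Type} (T : NAut A)

lemma μW_append (u v : List A) : T.μW (u ++ v) = matMul (T.μW u) (T.μW v) := by
  induction u with
  | nil => funext x z; simp [μW, matMul, matId]
  | cons a u ih =>
    funext x z
    simp only [List.cons_append, μW, ih, matMul, mul_sum, sum_mul, mul_assoc]
    exact sum_comm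

lemma μW_singleton (a : A) : T.μW [a] = T.μ a := by
  funext x z; simp [μW, matMul, matId]

lemma μW_nil_pos_iff {x z : T.Q} : 0 < T.μW [] x z ↔ x = z := by
  simp only [μW, matId]
  split_ifs with h <;> simp [h]

lemma mul_le_μW_append (u v : List A) (x t z : T.Q) :
    T.μW u x t * T.μW v t z ≤ T.μW (u ++ v) x z := by
  rw [μW_append]
  exact single_le_sum (f := fun s => T.μW u x s * T.μW v s z) (fun _ _ => Nat.zero_le _)
    (mem_univ t)

lemma μW_append_pos_iff {u v : List A} {x z : T.Q} :
    0 < T.μW (u ++ v) x z ↔ ∃ t, 0 < T.μW u x t ∧ 0 < T.μW v t z := by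
  simp [μW_append, matMul, sum_pos_iff, Nat.pos_iff_ne_zero]

def Reach (x z : T.Q) : Prop := ∃ w, 0 < T.μW w x z

def IsExitCut (y z : T.Q) (w : List A) (i : ℕ) : Prop :=
  ∃ b a, T.Reach b y ∧ ¬ T.Reach a y ∧ 0 < T.μW (w.take i) y b ∧
    0 < T.μW (w.factor i (i + 1)) b a ∧ 0 < T.μW (w.drop (i + 1)) a z

/-- Each run from `x ∈ C` to `z ∉ C` is counted at the position where it first leaves `C`. -/
lemma μW_le_sum_exits (C : T.Q → Prop) [DecidablePred C] {z : T.Q} (hz : ¬ C z) (w : List A)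
    {x : T.Q} (hx : C x) :
    T.μW w x z ≤ ∑ i ∈ range w.length, ∑ b ∈ univ.filter C, ∑ a ∈ univ.filter (¬ C ·),
      T.μW (w.take i) x b * T.μW (w.factor i (i + 1)) b a * T.μW (w.drop (i + 1)) a z := by
  induction w generalizing x with
  | nil =>
    have hxz : x ≠ z := fun h => hz (h ▸ hx)
    simp [μW, matId, hxz]
  | cons c w ih =>
    have first_exit : ∑ a ∈ univ.filter (¬ C ·), T.μ c x a * T.μW w a z =
        ∑ b ∈ univ.filter C, ∑ a ∈ univ.filter (¬ C ·),
          T.μW ([] : List A) x b * T.μW [c] b a * T.μW w a z := by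
      simp only [μW_singleton]
      simp [μW, matId, hx]
    have later_exit : ∑ t ∈ univ.filter C, T.μ c x t * (∑ i ∈ range w.length,
        ∑ b ∈ univ.filter C, ∑ a ∈ univ.filter (¬ C ·),
          T.μW (w.take i) t b * T.μW (w.factor i (i + 1)) b a * T.μW (w.drop (i + 1)) a z) ≤
        ∑ i ∈ range w.length, ∑ b ∈ univ.filter C, ∑ a ∈ univ.filter (¬ C ·),
          T.μW (c :: w.take i) x b * T.μW (w.factor i (i + 1)) b a *
            T.μW (w.drop (i + 1)) a z := by
      calc _ = ∑ i ∈ range w.length, ∑ b ∈ univ.filter C, ∑ a ∈ univ.filter (¬ C ·),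
            (∑ t ∈ univ.filter C, T.μ c x t * T.μW (w.take i) t b) *
              T.μW (w.factor i (i + 1)) b a * T.μW (w.drop (i + 1)) a z := by
            simp only [mul_sum, sum_mul]
            rw [sum_comm]; refine sum_congr rfl fun i _ => ?_
            rw [sum_comm]; refine sum_congr rfl fun b _ => ?_
            rw [sum_comm]; exact sum_congr rfl fun a _ => sum_congr rfl fun t _ => by ring
        _ ≤ _ := by
            gcongr with i _ b _ a _
            exact sum_le_sum_of_subset (filter_subset _ _)
    calc T.μW (c :: w) x z = ∑ t, T.μ c x t * T.μW w t z := rfl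
      _ = ∑ t ∈ univ.filter C, T.μ c x t * T.μW w t z +
          ∑ t ∈ univ.filter (¬ C ·), T.μ c x t * T.μW w t z :=
        (sum_filter_add_sum_filter_not _ _ _).symm
      _ ≤ _ := add_le_add (sum_le_sum fun t ht => Nat.mul_le_mul_left _ (ih (mem_filter.1 ht).2))
          le_rfl
      _ ≤ _ := add_le_add later_exit first_exit.le
      _ = _ := by rw [List.length_cons, sum_range_succ']; rfl

variable {T}

lemma Reach.refl (x : T.Q) : T.Reach x x := ⟨[], T.μW_nil_pos_iff.2 rfl⟩

lemma Reach.trans {x y z : T.Q} (h₁ : T.Reach x y) (h₂ : T.Reach y z) : T.Reach x z :=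
  let ⟨u, hu⟩ := h₁
  let ⟨v, hv⟩ := h₂
  ⟨u ++ v, T.μW_append_pos_iff.2 ⟨y, hu, hv⟩⟩

lemma μW_le_one_of_reach (hT : ¬ ∃ q v, T.HeavyCycle q v) {y b : T.Q} (hby : T.Reach b y)
    (w : List A) : T.μW w y b ≤ 1 := by
  by_contra! hw
  obtain ⟨v, hv⟩ := hby
  have hne : w ≠ [] := by
    rintro rfl
    simp [μW, matId] at hw
    split_ifs at hw <;> omega
  refine hT ⟨y, w ++ v, by simp [hne], ?_⟩
  calc 2 ≤ T.μW w y b * T.μW v b y := by nlinarith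
    _ ≤ T.μW (w ++ v) y y := T.mul_le_μW_append w v y b y

/-- Homogeneity makes the positivity pattern `e` of the factors idempotent; loops of `e` before
and after the exit are the two ends of the barbell. -/
lemma exists_barbell_of_isExitCut {y z : T.Q} {w : List A} {p : Fin 4 → ℕ} (hp : StrictMono p)
    {e : T.Q → T.Q → Prop}
    (he : ∀ k l, k < l → (fun x x' => 0 < T.μW (w.factor (p k) (p l)) x x') = e)
    (hcut : T.IsExitCut y z w (p 1)) :
    ∃ α β v, T.Barbell α β v ∧ T.Reach y α ∧ T.Reach β z := by
  have pos_iff : ∀ k l, k < l → ∀ x x', 0 < T.μW (w.factor (p k) (p l)) x x' ↔ e x x' :=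
    fun k l hkl x x' => by rw [← he k l hkl]
  have p01 := (hp (show (0 : Fin 4) < 1 by decide)).le
  have p12 := hp (show (1 : Fin 4) < 2 by decide)
  have p23 := (hp (show (2 : Fin 4) < 3 by decide)).le
  have e_idem : ∀ x x', e x x' ↔ ∃ t, e x t ∧ e t x' := fun x x' => by
    rw [← pos_iff 0 2 (by decide), ← w.factor_append_factor p01 p12.le, μW_append_pos_iff]
    simp only [pos_iff 0 1 (by decide), pos_iff 1 2 (by decide)]
  have reach_of_e : ∀ {x x'}, e x x' → T.Reach x x' := fun h =>
    ⟨_, (pos_iff 0 1 (by decide) _ _).2 h⟩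
  obtain ⟨b, a, hby, hay, hyb, hba, haz⟩ := hcut
  rw [← w.take_append_factor p01, μW_append_pos_iff] at hyb
  obtain ⟨x₀, hyx₀, hx₀b⟩ := hyb
  rw [pos_iff 0 1 (by decide)] at hx₀b
  rw [← w.factor_append_drop p12, ← w.factor_append_drop p23, μW_append_pos_iff] at haz
  obtain ⟨x₂, hax₂, hx₂z⟩ := haz
  obtain ⟨x₃, hx₂x₃, hx₃z⟩ := T.μW_append_pos_iff.1 hx₂z
  rw [pos_iff 2 3 (by decide)] at hx₂x₃
  have hbx₂ : e b x₂ := by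
    rw [← pos_iff 1 2 (by decide), ← w.factor_append_factor (Nat.le_succ _) p12,
      μW_append_pos_iff]
    exact ⟨a, hba, hax₂⟩
  obtain ⟨α, hx₀α, hαα, hαb⟩ := exists_loop_of_idempotent e_idem hx₀b
  obtain ⟨β, hx₂β, hββ, hβx₃⟩ := exists_loop_of_idempotent e_idem hx₂x₃
  have hαβ : e α β := (e_idem α β).2 ⟨b, hαb, (e_idem b β).2 ⟨x₂, hbx₂, hx₂β⟩⟩
  have hne : α ≠ β := by
    rintro rfl
    exact hay (Reach.trans ⟨_, hax₂⟩ ((reach_of_e hx₂β).trans ((reach_of_e hαb).trans hby)))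
  refine ⟨α, β, w.factor (p 0) (p 1), ⟨hne, fun hv => ?_, ?_, ?_, ?_⟩,
    Reach.trans ⟨_, hyx₀⟩ (reach_of_e hx₀α), (reach_of_e hβx₃).trans ⟨_, hx₃z⟩⟩
  · have := (pos_iff 0 1 (by decide) α β).2 hαβ
    rw [hv, μW_nil_pos_iff] at this
    exact hne this
  · exact (pos_iff 0 1 (by decide) α α).2 hαα
  · exact (pos_iff 0 1 (by decide) α β).2 hαβ
  · exact (pos_iff 0 1 (by decide) β β).2 hββ

section

open scoped Classical

lemma exists_barbell_of_many_isExitCut : ∃ R, ∀ (y z : T.Q) (w : List A) (S : Finset ℕ),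
    (∀ i ∈ S, T.IsExitCut y z w i) → R ≤ #S →
    ∃ α β v, T.Barbell α β v ∧ T.Reach y α ∧ T.Reach β z := by
  obtain ⟨R, hR⟩ := exists_homogeneous (ι := ℕ) (κ := T.Q → T.Q → Prop) 4
  refine ⟨R, fun y z w S hS hRS => ?_⟩
  obtain ⟨p, e, hpS, hp⟩ := hR S (fun i j x x' => 0 < T.μW (w.factor i j) x x') hRS
  exact exists_barbell_of_isExitCut p.strictMono hp (hS _ (hpS 1))

lemma isExitCut_of_sum_ne_zero {y z : T.Q} {w : List A} {i : ℕ}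
    (h : ∑ b ∈ univ.filter (T.Reach · y), ∑ a ∈ univ.filter (¬ T.Reach · y),
      T.μW (w.take i) y b * T.μW (w.factor i (i + 1)) b a * T.μW (w.drop (i + 1)) a z ≠ 0) :
    T.IsExitCut y z w i := by
  obtain ⟨b, hb, h⟩ := exists_ne_zero_of_sum_ne_zero h
  obtain ⟨a, ha, h⟩ := exists_ne_zero_of_sum_ne_zero h
  simp only [mul_ne_zero_iff, ← Nat.pos_iff_ne_zero] at h
  exact ⟨b, a, (mem_filter.1 hb).2, (mem_filter.1 ha).2, h.1.1, h.1.2, h.2⟩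

lemma sum_exits_le (hT : ¬ ∃ q v, T.HeavyCycle q v) {y z : T.Q}
    {K B : ℕ} (hK : ∀ c b a, T.μ c b a ≤ K)
    (hB : ∀ a, T.Reach y a → ¬ T.Reach a y → ∀ w, T.μW w a z ≤ B)
    {w : List A} {i : ℕ} (hi : i < w.length) :
    ∑ b ∈ univ.filter (T.Reach · y), ∑ a ∈ univ.filter (¬ T.Reach · y),
      T.μW (w.take i) y b * T.μW (w.factor i (i + 1)) b a * T.μW (w.drop (i + 1)) a z ≤
    Fintype.card T.Q * (Fintype.card T.Q * (K * B)) := by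
  calc _ ≤ ∑ b ∈ univ.filter (T.Reach · y), ∑ a ∈ univ.filter (¬ T.Reach · y), K * B :=
        sum_le_sum fun b hb => sum_le_sum fun a ha => ?_
    _ ≤ _ := by
        simp only [sum_const, smul_eq_mul]
        gcongr <;> exact card_le_univ _
  by_cases h0 : T.μW (w.take i) y b * T.μW (w.factor i (i + 1)) b a = 0
  · simp [h0]
  simp only [mul_ne_zero_iff, ← Nat.pos_iff_ne_zero] at h0
  calc _ ≤ 1 * K * B := by
        gcongr
        · exact μW_le_one_of_reach hT (mem_filter.1 hb).2 _
        · rw [w.factor_succ hi, μW_singleton]; exact hK _ _ _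
        · exact hB a (Reach.trans ⟨_, h0.1⟩ ⟨_, h0.2⟩) (mem_filter.1 ha).2 _
    _ = K * B := by rw [one_mul]

lemma exists_bound_of_lower_states [Fintype A] (hT : ¬ ∃ q v, T.HeavyCycle q v)
    {q q' y : T.Q} (hG : ¬ T.GEdge q q') (hqy : T.Reach q y)
    (hlower : ∀ a, T.Reach y a → ¬ T.Reach a y → ∃ B, ∀ w, T.μW w a q' ≤ B) :
    ∃ B, ∀ w, T.μW w y q' ≤ B := by
  by_cases hq'y : T.Reach q' y
  · exact ⟨1, μW_le_one_of_reach hT hq'y⟩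
  obtain ⟨R, hR⟩ := exists_barbell_of_many_isExitCut (T := T)
  obtain ⟨K, hK⟩ := Finite.bddAbove_range fun c : A × T.Q × T.Q => T.μ c.1 c.2.1 c.2.2
  obtain ⟨B, hB⟩ :=
    exists_bound_of_finite fun a (h : T.Reach y a ∧ ¬ T.Reach a y) => hlower a h.1 h.2
  refine ⟨R * (Fintype.card T.Q * (Fintype.card T.Q * (K * B))), fun w => ?_⟩
  set G := fun i => ∑ b ∈ univ.filter (T.Reach · y), ∑ a ∈ univ.filter (¬ T.Reach · y),
    T.μW (w.take i) y b * T.μW (w.factor i (i + 1)) b a * T.μW (w.drop (i + 1)) a q'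
  have hcuts : #((range w.length).filter (G · ≠ 0)) < R := by
    by_contra! hRS
    obtain ⟨α, β, v, hv, hyα, hβq'⟩ :=
      hR y q' w _ (fun i hi => isExitCut_of_sum_ne_zero (mem_filter.1 hi).2) hRS
    exact hG ⟨α, β, v, hv, hqy.trans hyα, hβq'⟩
  calc T.μW w y q' ≤ ∑ i ∈ range w.length, G i :=
        μW_le_sum_exits T (T.Reach · y) hq'y w (Reach.refl y)
    _ = ∑ i ∈ (range w.length).filter (G · ≠ 0), G i := (sum_filter_ne_zero _).symm
    _ ≤ #((range w.length).filter (G · ≠ 0)) •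
          (Fintype.card T.Q * (Fintype.card T.Q * (K * B))) :=
        sum_le_card_nsmul _ _ _ fun i hi => sum_exits_le hT (fun c b a => hK ⟨(c, b, a), rfl⟩)
          (fun a h₁ h₂ => hB a ⟨h₁, h₂⟩) (mem_range.1 (mem_filter.1 hi).1)
    _ ≤ _ := by rw [smul_eq_mul]; gcongr

lemma exists_bound_of_not_gEdge [Fintype A] (hT : ¬ ∃ q v, T.HeavyCycle q v) {q q' : T.Q}
    (hG : ¬ T.GEdge q q') : ∃ B, ∀ w, T.μW w q q' ≤ B := by
  suffices ∀ y, T.Reach q y → ∃ B, ∀ w, T.μW w y q' ≤ B from this q (Reach.refl q)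
  intro y
  induction y using (measure fun y => #(univ.filter (T.Reach y))).wf.induction with
  | _ y ih =>
  intro hqy
  refine exists_bound_of_lower_states hT hG hqy fun a hya hay => ih a ?_ (hqy.trans hya)
  exact card_lt_card ⟨monotone_filter_right _ fun _ _ => hya.trans,
    fun h => hay (mem_filter.1 (h (mem_filter.2 ⟨mem_univ y, Reach.refl y⟩))).2⟩

end

end NAut

theorem stmt13_general {A : Type} [Fintype A] (T : NAut A)
    (h : ¬ ∃ q v, T.HeavyCycle q v) :
    ∃ Bd : ℕ, ∀ (i : ℕ) (q q' : T.Q) (w : List A),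
      HeightIs T.GEdge q i → HeightIs T.GEdge q' i → T.μW w q q' ≤ Bd := by
  obtain ⟨B, hB⟩ := exists_bound_of_finite (P := fun p : T.Q × T.Q => ¬ T.GEdge p.1 p.2)
    (f := fun p w => T.μW w p.1 p.2) fun _ hp => NAut.exists_bound_of_not_gEdge h hp
  exact ⟨B, fun _ q q' w hq hq' => hB (q, q') (hq.not_rel hq') w⟩

theorem stmt13 {A : Type} [Fintype A] (T : NAut A) (hT : T.Trim)
    (h : ¬ ∃ q v, T.HeavyCycle q v) :
    ∃ Bd : ℕ, ∀ (i : ℕ) (q q' : T.Q) (w : List A),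
      HeightIs T.GEdge q i → HeightIs T.GEdge q' i → T.μW w q q' ≤ Bd :=
  stmt13_general T h
end
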